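/- For every real α with 1 < α < 2 and every integer n ≥ 1, (∑_{i=1}^n i)^α / ∑_{i=1}^n i^{2α−1} ≤ (∑_{i=1}^{n+1} i)^α / ∑_{i=1}^{n+1} i^{2α−1}. -/

import Mathlib

/-!
Since `∑_{i ≤ n} i = (n + 1) / 2 * n`, the factor `((n + 1) / 2) ^ α` cancels, and with
`T n = ∑_{i ≤ n} i ^ (2α - 1)` the claim becomes
`n ^ α * (n + 1) ^ (2α - 1) ≤ ((n + 2) ^ α - n ^ α) * T n`, proved by induction on `n`.
The inductive step amounts to
`(y + 2) ^ (α - 1) * ((y + 2) ^ α - y ^ α) ≤ (y + 1) ^ (α - 1) * ((y + 3) ^ α - (y + 1) ^ α)`.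
Writing each difference `x ^ α - z ^ α` as `α * ∫ t ^ (α - 1)`, this becomes an integral over
`s ∈ [0, 2]`. Pairing `s` with `2 - s`, the integrand compares the concave function
`t ↦ t ^ (α - 1)` on two pairs with the same sum, and the pair `(y + 2) (y + s)`,
`(y + 2) (y + 2 - s)` is more spread out than `(y + 1) (y + 1 + s)`, `(y + 1) (y + 3 - s)`.
-/

open Real Set intervalIntegral

theorem ConcaveOn.map_add_map_le_of_add_eq {𝕜 : Type*} [Field 𝕜] [LinearOrder 𝕜]
    [IsStrictOrderedRing 𝕜] {s : Set 𝕜} {f : 𝕜 → 𝕜} (hf : ConcaveOn 𝕜 s f) {a b c d : 𝕜}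
    (hc : c ∈ s) (hd : d ∈ s) (hca : c ≤ a) (had : a ≤ d) (hsum : a + b = c + d) :
    f c + f d ≤ f a + f b := by
  obtain hcd | hcd := (hca.trans had).eq_or_lt
  · obtain rfl : a = c := le_antisymm (hcd ▸ had) hca
    obtain rfl : b = d := by linarith
    rfl
  have hdc : 0 < d - c := sub_pos.2 hcd
  set t := (d - a) / (d - c)
  have ht0 : 0 ≤ t := div_nonneg (sub_nonneg.2 had) hdc.le
  have ht1 : 0 ≤ 1 - t := by
    rw [sub_nonneg, div_le_one hdc]
    linarith
  have ht : t * (d - c) = d - a := div_mul_cancel₀ _ hdc.ne'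
  have ha : t • c + (1 - t) • d = a := by
    simp only [smul_eq_mul]
    linear_combination -ht
  have hb : (1 - t) • c + t • d = b := by
    simp only [smul_eq_mul]
    linear_combination ht - hsum
  have h₁ := hf.2 hc hd ht0 ht1 (by ring)
  have h₂ := hf.2 hc hd ht1 ht0 (by ring)
  rw [ha] at h₁
  rw [hb] at h₂
  simp only [smul_eq_mul] at h₁ h₂
  linarith

theorem integral_add_rpow_sub_one (y h : ℝ) {α : ℝ} (hα : 0 < α) :
    ∫ s in (0 : ℝ)..h, (y + s) ^ (α - 1) = ((y + h) ^ α - y ^ α) / α := by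
  rw [integral_comp_add_left (fun t ↦ t ^ (α - 1)), integral_rpow (Or.inl (by linarith)),
    sub_add_cancel, add_zero]

theorem integral_nonneg_of_add_reflect_nonneg {g : ℝ → ℝ} {c : ℝ} (hc : 0 ≤ c)
    (hg : Continuous g) (h : ∀ s ∈ Icc 0 c, 0 ≤ g s + g (2 * c - s)) :
    0 ≤ ∫ s in (0 : ℝ)..2 * c, g s := by
  have hreflect : ∫ s in (0 : ℝ)..c, g (2 * c - s) = ∫ s in c..2 * c, g s := by
    rw [integral_comp_sub_left, sub_zero, two_mul, add_sub_cancel_right]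
  rw [← integral_add_adjacent_intervals (hg.intervalIntegrable 0 c)
    (hg.intervalIntegrable c (2 * c)), ← hreflect,
    ← integral_add (hg.intervalIntegrable _ _)
      ((by fun_prop : Continuous fun s ↦ g (2 * c - s)).intervalIntegrable _ _)]
  exact integral_nonneg hc h

theorem rpow_sub_one_mul_rpow_sub_rpow_le {α y : ℝ} (hα1 : 1 ≤ α) (hα2 : α ≤ 2) (hy : 0 ≤ y) :
    (y + 2) ^ (α - 1) * ((y + 2) ^ α - y ^ α) ≤
      (y + 1) ^ (α - 1) * ((y + 3) ^ α - (y + 1) ^ α) := by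
  have hα : 0 < α := by linarith
  have hβ : 0 ≤ α - 1 := by linarith
  let g s :=
    (y + 1) ^ (α - 1) * (y + 1 + s) ^ (α - 1) - (y + 2) ^ (α - 1) * (y + s) ^ (α - 1)
  have hcont (c : ℝ) : Continuous fun s ↦ (c + s) ^ (α - 1) := by
    fun_prop (disch := exact fun _ ↦ Or.inr hβ)
  have hg : Continuous g := by fun_prop
  have hintegral : ∫ s in (0 : ℝ)..2, g s = ((y + 1) ^ (α - 1) * ((y + 3) ^ α - (y + 1) ^ α) -
      (y + 2) ^ (α - 1) * ((y + 2) ^ α - y ^ α)) / α := by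
    rw [integral_sub (((hcont _).const_mul _).intervalIntegrable _ _)
      (((hcont _).const_mul _).intervalIntegrable _ _), integral_const_mul, integral_const_mul,
      integral_add_rpow_sub_one _ _ hα, integral_add_rpow_sub_one _ _ hα]
    ring_nf
  have hpair : ∀ s ∈ Icc (0 : ℝ) 1, 0 ≤ g s + g (2 * 1 - s) := by
    rintro s ⟨hs0, hs1⟩
    have key := (concaveOn_rpow hβ (by linarith)).map_add_map_le_of_add_eq
      (a := (y + 1) * (y + 1 + s)) (b := (y + 1) * (y + 3 - s))
      (c := (y + 2) * (y + s)) (d := (y + 2) * (y + 2 - s))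
      (mem_Ici.2 (by positivity)) (mem_Ici.2 (by nlinarith)) (by nlinarith) (by nlinarith)
      (by ring)
    rw [mul_rpow (by positivity) (by positivity), mul_rpow (by positivity) (by linarith),
      mul_rpow (by positivity) (by positivity), mul_rpow (by positivity) (by linarith)] at key
    simp only [g]
    rw [show y + 1 + (2 * 1 - s) = y + 3 - s by ring, show y + (2 * 1 - s) = y + 2 - s by ring]
    linarith
  have := integral_nonneg_of_add_reflect_nonneg zero_le_one hg hpair
  rwa [mul_one, hintegral, le_div_iff₀ hα, zero_mul, sub_nonneg] at this

theorem sum_Icc_one_natCast {K : Type*} [Field K] [CharZero K] (n : ℕ) :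
    ∑ i ∈ Finset.Icc 1 n, (i : K) = n * (n + 1) / 2 := by
  induction n with
  | zero => simp
  | succ n ih =>
    rw [Finset.sum_Icc_succ_top (by omega), ih]
    push_cast
    ring

theorem rpow_mul_rpow_le_sub_mul_sum {α : ℝ} (hα1 : 1 ≤ α) (hα2 : α ≤ 2) (n : ℕ) :
    (n : ℝ) ^ α * ((n : ℝ) + 1) ^ (2 * α - 1) ≤
      (((n : ℝ) + 2) ^ α - (n : ℝ) ^ α) * ∑ i ∈ Finset.Icc 1 n, (i : ℝ) ^ (2 * α - 1) := by
  have hα : 0 < α := by linarith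
  have hsplit {x : ℝ} (hx : 0 < x) : x ^ (2 * α - 1) = x ^ α * x ^ (α - 1) := by
    rw [← rpow_add hx]
    ring_nf
  induction n with
  | zero => simp [zero_rpow hα.ne']
  | succ n ih =>
    rw [Finset.sum_Icc_succ_top (by omega)]
    push_cast
    set N : ℝ := (n : ℝ)
    set T := ∑ i ∈ Finset.Icc 1 n, (i : ℝ) ^ (2 * α - 1)
    have hN : 0 ≤ N := Nat.cast_nonneg n
    set D := (N + 2) ^ α - N ^ α
    set D' := (N + 3) ^ α - (N + 1) ^ α
    have hD : 0 < D := sub_pos.2 (rpow_lt_rpow hN (by linarith) hα)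
    have hD' : 0 ≤ D' := sub_nonneg.2 (rpow_le_rpow (by positivity) (by linarith) hα.le)
    rw [show N + 1 + 1 = N + 2 by ring, show N + 1 + 2 = N + 3 by ring]
    refine le_of_mul_le_mul_left ?_ hD
    calc D * ((N + 1) ^ α * (N + 2) ^ (2 * α - 1))
        = (N + 1) ^ α * (N + 2) ^ α * ((N + 2) ^ (α - 1) * D) := by
          rw [hsplit (by positivity)]
          ring
      _ ≤ (N + 1) ^ α * (N + 2) ^ α * ((N + 1) ^ (α - 1) * D') :=
          mul_le_mul_of_nonneg_left (rpow_sub_one_mul_rpow_sub_rpow_le hα1 hα2 hN)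
            (by positivity)
      _ = D' * (N ^ α * (N + 1) ^ (2 * α - 1)) + D' * D * (N + 1) ^ (2 * α - 1) := by
          rw [hsplit (by positivity)]
          ring
      _ ≤ D' * (D * T) + D' * D * (N + 1) ^ (2 * α - 1) := by gcongr
      _ = D * (D' * (T + (N + 1) ^ (2 * α - 1))) := by ring

theorem ratio_decreasing (α : ℝ) (hα1 : 1 < α) (hα2 : α < 2) (n : ℕ) (hn : 1 ≤ n) :
    (∑ i ∈ Finset.Icc 1 n, (i : ℝ)) ^ α / ∑ i ∈ Finset.Icc 1 n, (i : ℝ) ^ (2 * α - 1) ≤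
      (∑ i ∈ Finset.Icc 1 (n + 1), (i : ℝ)) ^ α /
        ∑ i ∈ Finset.Icc 1 (n + 1), (i : ℝ) ^ (2 * α - 1) := by
  have hT : 0 < ∑ i ∈ Finset.Icc 1 n, (i : ℝ) ^ (2 * α - 1) :=
    Finset.sum_pos (fun i hi ↦ rpow_pos_of_pos (Nat.cast_pos.2 (Finset.mem_Icc.1 hi).1) _)
      (Finset.nonempty_Icc.2 hn)
  have key := rpow_mul_rpow_le_sub_mul_sum hα1.le hα2.le n
  rw [sum_Icc_one_natCast, sum_Icc_one_natCast, Finset.sum_Icc_succ_top (by omega),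
    div_le_div_iff₀ hT (by positivity)]
  push_cast
  rw [show (n : ℝ) * (n + 1) / 2 = (n + 1) / 2 * n by ring,
    show ((n : ℝ) + 1) * (n + 1 + 1) / 2 = (n + 1) / 2 * (n + 2) by ring,
    mul_rpow (by positivity) (by positivity), mul_rpow (by positivity) (by positivity)]
  linear_combination (((n : ℝ) + 1) / 2) ^ α * key
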